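/- Define sequences of finite sets of rationals in [0,1] by V₀ = {0, 1} and, given V_m listed in increasing order as q₀ < q₁ < ... < q_{2^m} with q_i = a_i/b_i in lowest terms, let p_i = (a_{i-1} + a_i)/(b_{i-1} + b_i) (the mediant) and V_{m+1} = V_m ∪ {p₁, ..., p_{2^m}}. Then for every m and every consecutive pair q_{j-1} < q_j in V_m, one has q_j − q_{j-1} ≤ 1/(m+1). -/

import Mathlib

/-!
Consecutive entries `a/b < c/d` of `V_m` are Farey neighbours, `bc - ad = 1`, with `bd ≥ m + 1`.
Both properties pass to the two new pairs `a/b, (a+c)/(b+d)` and `(a+c)/(b+d), c/d`: the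
determinant stays `1`, so the mediant is already in lowest terms, and `b(b+d) ≥ bd + 1`.
Since `c/d - a/b = 1/(bd)`, the gap is at most `1/(m+1)`.
-/

/-- The mediant of two rationals (written in lowest terms as `num/den`). -/
def mediant (q r : ℚ) : ℚ := ((q.num + r.num : ℤ) : ℚ) / (((q.den : ℤ) + (r.den : ℤ) : ℤ) : ℚ)

/-- Insert the mediant between each pair of consecutive entries of a list. -/
def insertMediants : List ℚ → List ℚ
  | [] => []
  | [q] => [q]
  | q :: r :: l => q :: mediant q r :: insertMediants (r :: l)

/-- The Stern–Brocot (Farey mediant) subdivision of `[0,1]`: `V₀ = [0,1]`,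
and `V_{m+1}` is obtained from `V_m` by inserting mediants. -/
def sternBrocot : ℕ → List ℚ
  | 0 => [0, 1]
  | m + 1 => insertMediants (sternBrocot m)

section Mediant

variable {q r : ℚ}

lemma sub_eq_one_div_den_mul_den (h : (q.den : ℤ) * r.num - q.num * r.den = 1) :
    r - q = 1 / ((q.den : ℚ) * r.den) := by
  have hq : (q.den : ℚ) ≠ 0 := by positivity
  have hr : (r.den : ℚ) ≠ 0 := by positivity
  have h' : (q.den : ℚ) * r.num - q.num * r.den = 1 := by exact_mod_cast h
  rw [eq_div_iff (mul_ne_zero hq hr), ← h', ← q.mul_den_eq_num, ← r.mul_den_eq_num]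
  ring

lemma isCoprime_num_add_num_den_add_den (h : (q.den : ℤ) * r.num - q.num * r.den = 1) :
    IsCoprime (q.num + r.num) ((q.den : ℤ) + r.den) :=
  ⟨q.den, -q.num, by linear_combination h⟩

lemma num_mediant (h : (q.den : ℤ) * r.num - q.num * r.den = 1) :
    (mediant q r).num = q.num + r.num :=
  Rat.num_div_eq_of_coprime (by positivity)
    (Int.isCoprime_iff_gcd_eq_one.mp (isCoprime_num_add_num_den_add_den h))

lemma den_mediant (h : (q.den : ℤ) * r.num - q.num * r.den = 1) :
    (mediant q r).den = q.den + r.den := by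
  have hden : ((mediant q r).den : ℤ) = q.den + r.den := Rat.den_div_eq_of_coprime
    (by positivity) (Int.isCoprime_iff_gcd_eq_one.mp (isCoprime_num_add_num_den_add_den h))
  exact_mod_cast hden

end Mediant

def FareyNeighbours (n : ℕ) (q r : ℚ) : Prop :=
  (q.den : ℤ) * r.num - q.num * r.den = 1 ∧ n ≤ q.den * r.den

namespace FareyNeighbours

variable {n : ℕ} {q r : ℚ}

lemma sub_le (h : FareyNeighbours n q r) (hn : 0 < n) : r - q ≤ 1 / (n : ℚ) := by
  rw [sub_eq_one_div_den_mul_den h.1]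
  exact one_div_le_one_div_of_le (by positivity) (by exact_mod_cast h.2)

lemma mediant_left (h : FareyNeighbours n q r) : FareyNeighbours (n + 1) q (mediant q r) := by
  obtain ⟨hdet, hden⟩ := h
  refine ⟨?_, ?_⟩
  · rw [num_mediant hdet, den_mediant hdet]
    push_cast
    linear_combination hdet
  · rw [den_mediant hdet]
    nlinarith [q.pos]

lemma mediant_right (h : FareyNeighbours n q r) : FareyNeighbours (n + 1) (mediant q r) r := by
  obtain ⟨hdet, hden⟩ := h
  refine ⟨?_, ?_⟩
  · rw [num_mediant hdet, den_mediant hdet]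
    push_cast
    linear_combination hdet
  · rw [den_mediant hdet]
    nlinarith [r.pos]

end FareyNeighbours

lemma exists_insertMediants_cons_eq_cons (r : ℚ) (l : List ℚ) :
    ∃ t, insertMediants (r :: l) = r :: t := by
  cases l with
  | nil => exact ⟨[], rfl⟩
  | cons s l' => exact ⟨_, rfl⟩

lemma isChain_insertMediants {R S : ℚ → ℚ → Prop}
    (hleft : ∀ q r, R q r → S q (mediant q r)) (hright : ∀ q r, R q r → S (mediant q r) r) :
    ∀ l : List ℚ, l.IsChain R → (insertMediants l).IsChain S
  | [], _ => List.isChain_nil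
  | [q], _ => List.isChain_singleton q
  | q :: r :: l, h => by
    obtain ⟨hqr, hrest⟩ := List.isChain_cons_cons.mp h
    have ih := isChain_insertMediants hleft hright (r :: l) hrest
    obtain ⟨t, ht⟩ := exists_insertMediants_cons_eq_cons r l
    rw [ht] at ih
    rw [insertMediants, ht]
    exact List.isChain_cons_cons.mpr
      ⟨hleft q r hqr, List.isChain_cons_cons.mpr ⟨hright q r hqr, ih⟩⟩

lemma isChain_sternBrocot (m : ℕ) : (sternBrocot m).IsChain (FareyNeighbours (m + 1)) := by
  induction m with
  | zero => exact List.isChain_pair.mpr ⟨by decide, by decide⟩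
  | succ m ih =>
    exact isChain_insertMediants (fun _ _ => FareyNeighbours.mediant_left)
      (fun _ _ => FareyNeighbours.mediant_right) _ ih

/-- Consecutive elements of the level-`m` Stern–Brocot subdivision of `[0,1]`
differ by at most `1/(m+1)`. -/
theorem sternBrocot_gap (m j : ℕ) (hj : j + 1 < (sternBrocot m).length) :
    (sternBrocot m).get ⟨j + 1, hj⟩ - (sternBrocot m).get ⟨j, Nat.lt_of_succ_lt hj⟩
      ≤ 1 / ((m : ℚ) + 1) := by
  have hneighbours := List.isChain_iff_getElem.mp (isChain_sternBrocot m) j hj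
  exact_mod_cast hneighbours.sub_le m.succ_pos
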